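/- For p ∈ ℕ let φ_j(t) := √(2j+1)·P_j(2t−1) for 0 ≤ j ≤ p, where P_j is the j-th Legendre polynomial; the φ_j form an L²(0,1)-orthonormal basis of the polynomials of degree ≤ p. Then the DG stiffness matrix S with entries S_{ji} := ∫₀¹ φ_i'(t)·φ_j(t) dt + φ_i(0)·φ_j(0) is given explicitly by S_{ji} = √((2j+1)(2i+1)) · μ_{ij}, where μ_{ij} = 1 if i > j and μ_{ij} = (−1)^{i+j} if i ≤ j. -/

import Mathlib

/-!
By Rodrigues' formula, `±1` are `n`-fold roots of `(x² − 1)ⁿ`, so `n` integrations by parts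
show that `P_n` is orthogonal on `[-1, 1]` to every polynomial of degree `< n`, and the Leibniz
rule gives `P_n(±1) = (±1)ⁿ`. The substitution `x = 2t − 1` turns `S_{ji}` into
`√((2i+1)(2j+1))` times `∫₋₁¹ P_i' P_j + P_i(−1) P_j(−1)`. For `i < j` the integral
vanishes by orthogonality; for `j < i` one integration by parts and orthogonality leave
only the boundary term `P_i P_j |₋₁¹ = 1 − (−1)^{i+j}`; for `i = j` the integral is
`(P_i(1)² − P_i(−1)²)/2 = 0`.
-/

open MeasureTheory

/-- The `n`-th Legendre polynomial, via Rodrigues' formula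
`P_n(x) = (1/(2^n n!)) dⁿ/dxⁿ (x² − 1)ⁿ`, normalized so that `P_n(1) = 1`. -/
noncomputable def legendre (n : ℕ) : Polynomial ℝ :=
  Polynomial.C (1 / (2 ^ n * (n.factorial : ℝ))) *
    (Polynomial.derivative)^[n] ((Polynomial.X ^ 2 - 1) ^ n)

/-- The transplanted normalized Legendre polynomial `φ_j(t) = √(2j+1)·P_j(2t−1)`
on `(0,1)`, as a polynomial. -/
noncomputable def phiP (j : ℕ) : Polynomial ℝ :=
  Polynomial.C (Real.sqrt (2 * (j : ℝ) + 1)) *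
    (legendre j).comp (Polynomial.C 2 * Polynomial.X - 1)

open Polynomial Nat

namespace Polynomial

section CommRing

variable {R : Type*} [CommRing R]

theorem eval_iterate_derivative_X_sub_C_pow_mul (c : R) (n : ℕ) (q : R[X]) :
    (derivative^[n] ((X - C c) ^ n * q)).eval c = n ! * q.eval c := by
  rw [iterate_derivative_mul, eval_finsetSum, Finset.sum_eq_single_of_mem 0 (by simp)]
  · simp [iterate_derivative_X_sub_pow_self]
  · intro k hk hk0
    rw [iterate_derivative_X_sub_pow, Nat.sub_sub_self (Finset.mem_range_succ_iff.mp hk)]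
    simp [zero_pow hk0]

theorem isRoot_iterate_derivative_X_sub_C_pow_mul {c : R} {k n : ℕ} (hk : k < n) (q : R[X]) :
    (derivative^[k] ((X - C c) ^ n * q)).IsRoot c :=
  dvd_iff_isRoot.mp <| (dvd_pow_self _ (Nat.sub_ne_zero_of_lt hk)).trans
    (pow_sub_dvd_iterate_derivative_of_pow_dvd k (dvd_mul_right _ _))

theorem X_sq_sub_one_pow_eq_mul (n : ℕ) :
    ((X : R[X]) ^ 2 - 1) ^ n = (X - C 1) ^ n * (X - C (-1)) ^ n := by
  rw [← mul_pow]; simp only [map_one, map_neg]; ring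

end CommRing

theorem integral_derivative_mul_eq_sub (p q : ℝ[X]) (a b : ℝ) :
    ∫ x in a..b, (derivative p).eval x * q.eval x
      = p.eval b * q.eval b - p.eval a * q.eval a
        - ∫ x in a..b, p.eval x * (derivative q).eval x := by
  linarith [intervalIntegral.integral_mul_deriv_eq_deriv_mul (a := a) (b := b)
    (fun x _ => p.hasDerivAt x) (fun x _ => q.hasDerivAt x)
    ((derivative p).continuous.intervalIntegrable a b)
    ((derivative q).continuous.intervalIntegrable a b)]

theorem integral_iterate_derivative_mul {a b : ℝ} (m : ℕ) (f q : ℝ[X])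
    (hf : ∀ k < m, (derivative^[k] f).IsRoot a ∧ (derivative^[k] f).IsRoot b) :
    ∫ x in a..b, (derivative^[m] f).eval x * q.eval x
      = (-1) ^ m * ∫ x in a..b, f.eval x * (derivative^[m] q).eval x := by
  induction m generalizing f with
  | zero => simp
  | succ m ih =>
    obtain ⟨ha, hb⟩ := hf 0 m.succ_pos
    rw [Function.iterate_succ_apply, ih _ fun k hk => hf (k + 1) (by omega),
      integral_derivative_mul_eq_sub, ← Function.iterate_succ_apply' derivative]
    simp only [Function.iterate_zero_apply, IsRoot.def] at ha hb
    rw [ha, hb]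
    ring

theorem integral_derivative_comp_mul_comp (p q : ℝ[X]) (c d a b : ℝ) :
    ∫ t in a..b, (derivative (p.comp (C c * X - C d))).eval t * (q.comp (C c * X - C d)).eval t
      = ∫ x in c * a - d..c * b - d, (derivative p).eval x * q.eval x := by
  simp only [derivative_comp, eval_mul, eval_comp, derivative_sub, derivative_C_mul_X,
    derivative_C, sub_zero, eval_C, eval_sub, eval_X, mul_assoc]
  rw [intervalIntegral.integral_const_mul]
  exact intervalIntegral.mul_integral_comp_mul_sub
    (f := fun x => (derivative p).eval x * q.eval x) c d

end Polynomial

theorem legendre_eval_one (n : ℕ) : (legendre n).eval 1 = 1 := by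
  rw [legendre, X_sq_sub_one_pow_eq_mul, eval_mul, eval_C, eval_iterate_derivative_X_sub_C_pow_mul]
  norm_num
  field_simp

theorem legendre_eval_neg_one (n : ℕ) : (legendre n).eval (-1) = (-1) ^ n := by
  rw [legendre, X_sq_sub_one_pow_eq_mul, mul_comm ((X - C 1) ^ n), eval_mul, eval_C,
    eval_iterate_derivative_X_sub_C_pow_mul]
  norm_num
  rw [neg_pow]
  field_simp

theorem natDegree_legendre_le (n : ℕ) : (legendre n).natDegree ≤ n := by
  refine (natDegree_C_mul_le _ _).trans ((natDegree_iterate_derivative _ n).trans ?_)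
  have : (((X : ℝ[X]) ^ 2 - 1) ^ n).natDegree ≤ 2 * n := by
    refine natDegree_pow_le.trans ?_
    have : ((X : ℝ[X]) ^ 2 - 1).natDegree ≤ 2 := by compute_degree
    nlinarith
  omega

theorem integral_legendre_mul_eq_zero (n : ℕ) (q : ℝ[X]) (hq : q.natDegree < n) :
    ∫ x in (-1 : ℝ)..1, (legendre n).eval x * q.eval x = 0 := by
  have hroots : ∀ k < n, (derivative^[k] (((X : ℝ[X]) ^ 2 - 1) ^ n)).IsRoot (-1) ∧
      (derivative^[k] (((X : ℝ[X]) ^ 2 - 1) ^ n)).IsRoot 1 := fun k hk => by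
    rw [X_sq_sub_one_pow_eq_mul]
    exact ⟨mul_comm ((X - C (1 : ℝ)) ^ n) _ ▸ isRoot_iterate_derivative_X_sub_C_pow_mul hk _,
      isRoot_iterate_derivative_X_sub_C_pow_mul hk _⟩
  simp only [legendre, eval_mul, eval_C, mul_assoc, intervalIntegral.integral_const_mul,
    integral_iterate_derivative_mul n _ q hroots, iterate_derivative_eq_zero hq, eval_zero]
  simp

theorem integral_legendre_mul_derivative_legendre_eq_zero {i j : ℕ} (hji : j < i) :
    ∫ x in (-1 : ℝ)..1, (legendre i).eval x * (derivative (legendre j)).eval x = 0 :=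
  integral_legendre_mul_eq_zero i _ <|
    (natDegree_derivative_le _).trans_lt <| by have := natDegree_legendre_le j; omega

theorem integral_derivative_legendre_mul_legendre_add_eval_neg_one (i j : ℕ) :
    (∫ x in (-1 : ℝ)..1, (derivative (legendre i)).eval x * (legendre j).eval x)
        + (legendre i).eval (-1) * (legendre j).eval (-1)
      = if j < i then 1 else (-1) ^ (i + j) := by
  rcases lt_trichotomy j i with hji | rfl | hij
  · rw [if_pos hji, integral_derivative_mul_eq_sub,
      integral_legendre_mul_derivative_legendre_eq_zero hji]
    simp only [legendre_eval_one, legendre_eval_neg_one]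
    ring
  · have hibp := integral_derivative_mul_eq_sub (legendre j) (legendre j) (-1) 1
    simp only [mul_comm ((legendre j).eval _), legendre_eval_one,
      legendre_eval_neg_one] at hibp ⊢
    have hsq : ((-1 : ℝ) ^ j) * (-1) ^ j = 1 := by rw [← mul_pow]; norm_num
    rw [if_neg (lt_irrefl j), pow_add]
    linarith
  · simp only [mul_comm (eval _ (derivative (legendre i))),
      integral_legendre_mul_derivative_legendre_eq_zero hij, legendre_eval_neg_one,
      zero_add]
    rw [if_neg hij.asymm, pow_add]

theorem phiP_eq_comp (j : ℕ) :
    phiP j = (C (Real.sqrt (2 * (j : ℝ) + 1)) * legendre j).comp (C 2 * X - C 1) := by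
  rw [phiP, mul_comp, C_comp, map_one]

/-- the DG stiffness matrix in the transplanted normalized Legendre
basis: `S_{ji} = ∫₀¹ φ_i' φ_j dt + φ_i(0) φ_j(0) = √((2j+1)(2i+1)) μ_{ij}`, where
`μ_{ij} = 1` if `i > j` and `μ_{ij} = (−1)^{i+j}` if `i ≤ j`. -/
theorem stmt_12 (i j : ℕ) :
    (∫ t in (0:ℝ)..1, (Polynomial.derivative (phiP i)).eval t * (phiP j).eval t)
        + (phiP i).eval 0 * (phiP j).eval 0
      = Real.sqrt ((2 * (j : ℝ) + 1) * (2 * (i : ℝ) + 1)) *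
          (if j < i then 1 else (-1) ^ (i + j)) := by
  rw [phiP_eq_comp, phiP_eq_comp, integral_derivative_comp_mul_comp,
    ← integral_derivative_legendre_mul_legendre_add_eval_neg_one, Real.sqrt_mul (by positivity)]
  simp only [derivative_C_mul, eval_mul, eval_C, mul_mul_mul_comm _ (eval _ (derivative _)),
    intervalIntegral.integral_const_mul, eval_comp, eval_sub, eval_X]
  norm_num
  ring
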